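/- Let n - 1 > k ≥ 2 with k even, and let D = ⌊(n+k-2)/k⌋. Then the Wiener index of the Harary graph H_{k,n} equals (1/4)·n·D·(2n+k-2-kD). -/

import Mathlib

open Finset SimpleGraph

/-- The status of a vertex: sum of distances to all other vertices. -/
noncomputable def status {V : Type*} [Fintype V] (G : SimpleGraph V) (x : V) : ℕ :=
  ∑ y, G.dist x y

/-- The Wiener index: sum of distances over unordered pairs of vertices. -/
noncomputable def wiener {V : Type*} [Fintype V] [DecidableEq V] (G : SimpleGraph V) : ℚ :=
  (∑ p ∈ Finset.univ.offDiag, (G.dist p.1 p.2 : ℚ)) / 2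

/-- Eccentricity of a vertex. -/
noncomputable def ecc {V : Type*} [Fintype V] (G : SimpleGraph V) (x : V) : ℕ :=
  Finset.univ.sup (fun y => G.dist x y)

/-- Diameter: maximum distance between pairs of vertices. -/
noncomputable def graphDiam {V : Type*} [Fintype V] (G : SimpleGraph V) : ℕ :=
  Finset.univ.sup (fun p : V × V => G.dist p.1 p.2)

/-- The set of vertices at distance exactly `i` from `x`. -/
noncomputable def sphere {V : Type*} [Fintype V] [DecidableEq V] (G : SimpleGraph V) (x : V) (i : ℕ) :
    Finset V :=
  Finset.univ.filter (fun y => G.dist x y = i)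

/-- `G` is `k`-connected: more than `k` vertices and removing any `k-1` vertices
leaves a connected graph. -/
def IsKConnected {V : Type*} [Fintype V] (G : SimpleGraph V) (k : ℕ) : Prop :=
  k < Fintype.card V ∧
    ∀ S : Finset V, S.card ≤ k - 1 → (G.induce ((↑S : Set V)ᶜ)).Connected
/-- Circular distance between two positions on a cycle of length `n`. -/
def circDist (n : ℕ) (i j : Fin n) : ℕ :=
  min ((i.val + n - j.val) % n) ((j.val + n - i.val) % n)

lemma circDist_comm (n : ℕ) (i j : Fin n) : circDist n i j = circDist n j i := by
  unfold circDist; exact min_comm _ _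

/-- The Harary graph `H_{k,n}` for `k` even: each vertex is adjacent to the
nearest `k/2` vertices in each direction around the circle. -/
def hararyEven (k n : ℕ) : SimpleGraph (Fin n) where
  Adj i j := i ≠ j ∧ circDist n i j ≤ k / 2
  symm := ⟨by
    intro i j h
    exact ⟨h.1.symm, by rw [circDist_comm]; exact h.2⟩⟩
  loopless := ⟨fun i h => h.1 rfl⟩

/-- The Harary graph `H_{k,n}` for `k` odd and `n` even: each vertex is adjacent to
the nearest `(k-1)/2` vertices in each direction and to the diametrically opposite
vertex. -/
def hararyOddEven (k n : ℕ) : SimpleGraph (Fin n) where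
  Adj i j := i ≠ j ∧ (circDist n i j ≤ (k - 1) / 2 ∨ circDist n i j = n / 2)
  symm := ⟨by
    intro i j h
    refine ⟨h.1.symm, ?_⟩
    rw [circDist_comm]; exact h.2⟩
  loopless := ⟨fun i h => h.1 rfl⟩

/-- The Harary graph `H_{k,n}` for `k` and `n` both odd: obtained from `H_{k-1,n}` by
adding an edge between vertices `a` and `a + (n-1)/2` for `0 ≤ a ≤ (n-1)/2`. -/
def hararyOddOdd (k n : ℕ) : SimpleGraph (Fin n) where
  Adj i j := i ≠ j ∧ (circDist n i j ≤ (k - 1) / 2 ∨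
    ∃ a : Fin n, a.val ≤ (n - 1) / 2 ∧
      ((i = a ∧ j.val = (a.val + (n - 1) / 2) % n) ∨
       (j = a ∧ i.val = (a.val + (n - 1) / 2) % n)))
  symm := ⟨by
    intro i j h
    refine ⟨h.1.symm, ?_⟩
    rcases h.2 with h2 | ⟨a, ha, hc⟩
    · left; rw [circDist_comm]; exact h2
    · right; exact ⟨a, ha, hc.symm⟩⟩
  loopless := ⟨fun i h => h.1 rfl⟩

/-! In `H_{k,n}` the graph distance between `i` and `j` is `⌈c / (k/2)⌉`, where `c` is their
circular distance: an edge advances at most `k/2` around the circle, and one can always advance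
exactly `min (k/2) c` towards the target. Rotations are automorphisms, so every vertex has the
status of `0` and the Wiener index is `n/2` times it. Writing each distance as the number of
`t < D` with `t·(k/2) < c`, and noting that `n - 1 - 2s` vertices lie at circular distance more
than `s` from `0`, gives `status 0 = ∑_{t<D} (n - 1 - k t) = D(n-1) - k·D(D-1)/2`. -/

lemma Finset.sum_eq_sum_range_card_lt {ι : Type*} (s : Finset ι) (f : ι → ℕ) {D : ℕ}
    (hf : ∀ i ∈ s, f i ≤ D) : ∑ i ∈ s, f i = ∑ t ∈ range D, #{i ∈ s | t < f i} := by
  calc ∑ i ∈ s, f i = ∑ i ∈ s, #{t ∈ range D | t < f i} := by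
        refine sum_congr rfl fun i hi => ?_
        have hfilter : {t ∈ range D | t < f i} = range (f i) := by
          ext t
          simp only [mem_filter, mem_range]
          have := hf i hi
          omega
        rw [hfilter, card_range]
    _ = ∑ t ∈ range D, #{i ∈ s | t < f i} := by
        simp only [card_filter]
        exact sum_comm

lemma cast_sum_range_sub_mul (a b D : ℕ) (h : b * (D - 1) ≤ a) :
    ((∑ t ∈ range D, (a - b * t) : ℕ) : ℚ) = D * a - b * (D * (D - 1) / 2) := by
  induction D with
  | zero => simp
  | succ D ih =>
    have hD : b * D ≤ a := by simpa using h
    rw [sum_range_succ, Nat.cast_add, ih ((Nat.mul_le_mul_left b (Nat.sub_le D 1)).trans hD),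
      Nat.cast_sub hD]
    push_cast
    ring

lemma wiener_eq_sum_status {V : Type*} [Fintype V] [DecidableEq V] (G : SimpleGraph V) :
    wiener G = (∑ x, status G x : ℕ) / 2 := by
  have hdiag : ∀ p ∈ (univ : Finset (V × V)), p ∉ univ.offDiag → G.dist p.1 p.2 = 0 := by
    rintro ⟨x, y⟩ - hxy
    obtain rfl : x = y := by simpa using hxy
    exact dist_self
  rw [wiener, ← Nat.cast_sum, sum_subset (subset_univ _) hdiag, Fintype.sum_prod_type]
  rfl

section circDist

variable {n : ℕ}

lemma add_sub_mod_of_lt {a b : ℕ} (ha : a < n) (hb : b < n) :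
    (a + n - b) % n = if b ≤ a then a - b else a + n - b := by
  split_ifs with h
  · rw [show a + n - b = a - b + n by omega, Nat.add_mod_right, Nat.mod_eq_of_lt (by omega)]
  · exact Nat.mod_eq_of_lt (by omega)

lemma circDist_eq_min (i j : Fin n) :
    circDist n i j = min (i - j + (j - i) : ℕ) (n - (i - j + (j - i))) := by
  unfold circDist
  rw [add_sub_mod_of_lt i.isLt j.isLt, add_sub_mod_of_lt j.isLt i.isLt]
  split_ifs <;> omega

lemma circDist_self (i : Fin n) : circDist n i i = 0 := by
  simp [circDist_eq_min]

lemma eq_of_circDist_eq_zero {i j : Fin n} (h : circDist n i j = 0) : i = j := by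
  rw [circDist_eq_min] at h
  exact Fin.ext (by omega)

lemma circDist_zero_left [NeZero n] (j : Fin n) : circDist n 0 j = min (j : ℕ) (n - j) := by
  rw [circDist_eq_min, Fin.val_zero]
  omega

lemma circDist_triangle (i j l : Fin n) : circDist n i l ≤ circDist n i j + circDist n j l := by
  rw [circDist_eq_min, circDist_eq_min, circDist_eq_min]
  omega

lemma circDist_add_right [NeZero n] (a b t : Fin n) :
    circDist n (a + t) (b + t) = circDist n a b := by
  rw [circDist_eq_min, circDist_eq_min, Fin.val_add_eq_ite, Fin.val_add_eq_ite]
  split_ifs <;> omega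

lemma exists_circDist_eq_of_le (i j : Fin n) {a : ℕ} (ha : a ≤ circDist n i j) :
    ∃ w : Fin n, circDist n i w = a ∧ circDist n w j = circDist n i j - a := by
  simp only [circDist_eq_min] at ha ⊢
  suffices ∃ w < n, min (i - w + (w - i) : ℕ) (n - (i - w + (w - i))) = a ∧
      min (w - j + (j - w) : ℕ) (n - (w - j + (j - w))) =
        min (i - j + (j - i) : ℕ) (n - (i - j + (j - i))) - a by
    obtain ⟨w, hw, h⟩ := this
    exact ⟨⟨w, hw⟩, h⟩
  have hi := i.isLt
  have hj := j.isLt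
  rcases le_total (i : ℕ) j with hij | hji
  · by_cases hshort : j - i ≤ n - (j - i)
    · exact ⟨i + a, by omega, by omega, by omega⟩
    · by_cases hai : a ≤ i
      · exact ⟨i - a, by omega, by omega, by omega⟩
      · exact ⟨i + n - a, by omega, by omega, by omega⟩
  · by_cases hshort : i - j ≤ n - (i - j)
    · exact ⟨i - a, by omega, by omega, by omega⟩
    · by_cases hai : i + a < n
      · exact ⟨i + a, by omega, by omega, by omega⟩
      · exact ⟨i + a - n, by omega, by omega, by omega⟩

lemma card_lt_circDist_zero [NeZero n] (s : ℕ) :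
    #{v : Fin n | s < circDist n 0 v} = n - 1 - 2 * s := by
  simp only [circDist_zero_left]
  have hIco : ({v : Fin n | s < min (v : ℕ) (n - v)} : Finset (Fin n)).map Fin.valEmbedding =
      Ico (s + 1) (n - s) := by
    ext x
    simp only [mem_map, mem_filter, mem_univ, true_and, Fin.valEmbedding_apply, mem_Ico]
    constructor
    · rintro ⟨v, hv, rfl⟩
      omega
    · intro hx
      exact ⟨⟨x, by omega⟩, by simp only; omega, rfl⟩
  rw [← card_map, hIco, Nat.card_Ico]
  omega

end circDist

section hararyEven

variable {k n : ℕ}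

lemma circDist_le_mul_length {i j : Fin n} (p : (hararyEven k n).Walk i j) :
    circDist n i j ≤ k / 2 * p.length := by
  induction p with
  | nil => simp [circDist_self]
  | @cons u v w hadj _ ih =>
    rw [Walk.length_cons, mul_add_one]
    have := hadj.2
    exact (circDist_triangle u v w).trans (by omega)

lemma exists_walk_length_le (hk : 2 ≤ k) :
    ∀ (c : ℕ) (i j : Fin n), circDist n i j ≤ k / 2 * c →
      ∃ p : (hararyEven k n).Walk i j, p.length ≤ c
  | 0, i, j, h => by
    obtain rfl := eq_of_circDist_eq_zero (by simpa using h)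
    exact ⟨.nil, le_rfl⟩
  | c + 1, i, j, h => by
    by_cases hij : i = j
    · subst hij
      exact ⟨.nil, Nat.zero_le _⟩
    have hpos : circDist n i j ≠ 0 := mt eq_of_circDist_eq_zero hij
    obtain ⟨w, hiw, hwj⟩ := exists_circDist_eq_of_le i j (min_le_right (k / 2) (circDist n i j))
    have hadj : (hararyEven k n).Adj i w := by
      refine ⟨?_, hiw ▸ min_le_left _ _⟩
      rintro rfl
      rw [circDist_self] at hiw
      omega
    obtain ⟨p, hp⟩ := exists_walk_length_le hk c w j (by rw [mul_add_one] at h; omega)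
    exact ⟨.cons hadj p, by simpa using hp⟩

lemma hararyEven_dist_le_iff (hk : 2 ≤ k) {i j : Fin n} {c : ℕ} :
    (hararyEven k n).dist i j ≤ c ↔ circDist n i j ≤ k / 2 * c := by
  refine ⟨fun h => ?_, fun h => ?_⟩
  · obtain ⟨p, -⟩ := exists_walk_length_le hk _ i j (Nat.le_mul_of_pos_left _ (by omega))
    obtain ⟨q, hq⟩ := Reachable.exists_walk_length_eq_dist ⟨p⟩
    calc circDist n i j ≤ k / 2 * q.length := circDist_le_mul_length q
      _ ≤ k / 2 * c := by rw [hq]; gcongr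
  · obtain ⟨p, hp⟩ := exists_walk_length_le hk c i j h
    exact (dist_le p).trans hp

lemma hararyEven_dist_congr (hk : 2 ≤ k) {a b c d : Fin n} (h : circDist n a b = circDist n c d) :
    (hararyEven k n).dist a b = (hararyEven k n).dist c d :=
  eq_of_forall_ge_iff fun _ => by rw [hararyEven_dist_le_iff hk, hararyEven_dist_le_iff hk, h]

lemma status_hararyEven_eq_status_zero (hk : 2 ≤ k) [NeZero n] (x : Fin n) :
    status (hararyEven k n) x = status (hararyEven k n) 0 := by
  refine (Fintype.sum_equiv (Equiv.addRight x) _ _ fun j => hararyEven_dist_congr hk ?_).symm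
  simpa using (circDist_add_right 0 j x).symm

lemma status_hararyEven_zero (hk : 2 ≤ k) [NeZero n] {D : ℕ} (hD : n ≤ 2 * (k / 2 * D) + 1) :
    status (hararyEven k n) 0 = ∑ t ∈ range D, (n - 1 - 2 * (k / 2 * t)) := by
  have hbound : ∀ v ∈ (univ : Finset (Fin n)), (hararyEven k n).dist 0 v ≤ D := fun v _ => by
    rw [hararyEven_dist_le_iff hk, circDist_zero_left]
    omega
  unfold status
  rw [sum_eq_sum_range_card_lt _ _ hbound]
  refine sum_congr rfl fun t _ => ?_
  simp_rw [← not_le, hararyEven_dist_le_iff hk, not_le]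
  exact card_lt_circDist_zero (n := n) _

end hararyEven

theorem hararyEven_wiener_general (k n : ℕ) (hk : 2 ≤ k) (hke : Even k) :
    wiener (hararyEven k n) = (1 / 4 : ℚ) * (n : ℚ) * ((n + k - 2) / k : ℕ) *
      (2 * (n : ℚ) + (k : ℚ) - 2 - (k : ℚ) * ((n + k - 2) / k : ℕ)) := by
  rcases Nat.eq_zero_or_pos n with rfl | hn
  · simp [wiener_eq_sum_status]
  have : NeZero n := ⟨hn.ne'⟩
  set D := (n + k - 2) / k
  have hkD : k * D ≤ n + k - 2 ∧ n + k - 2 < k * D + k :=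
    ⟨Nat.mul_div_le _ _, Nat.lt_mul_div_succ _ (by omega)⟩
  have hm : 2 * (k / 2) = k := Nat.two_mul_div_two_of_even hke
  have hstatus : status (hararyEven k n) 0 = ∑ t ∈ range D, (n - 1 - k * t) := by
    simpa only [← mul_assoc, hm] using
      status_hararyEven_zero hk (D := D) (by rw [← mul_assoc, hm]; omega)
  have hterms : k * (D - 1) ≤ n - 1 := by
    rw [Nat.mul_sub_one]
    omega
  rw [wiener_eq_sum_status, sum_congr rfl fun x _ => status_hararyEven_eq_status_zero hk x,
    sum_const, card_univ, Fintype.card_fin, smul_eq_mul, Nat.cast_mul, hstatus,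
    cast_sum_range_sub_mul _ _ _ hterms, Nat.cast_sub hn]
  push_cast
  ring

/-- For `k` even, `n - 1 > k ≥ 2`, with `D = ⌊(n+k-2)/k⌋`, the Wiener index of
`H_{k,n}` equals `(1/4)·n·D·(2n+k-2-kD)`. -/
theorem hararyEven_wiener (k n : ℕ) (hk : 2 ≤ k) (hke : Even k) (hn : k < n - 1) :
    wiener (hararyEven k n) = (1 / 4 : ℚ) * (n : ℚ) * ((n + k - 2) / k : ℕ) *
      (2 * (n : ℚ) + (k : ℚ) - 2 - (k : ℚ) * ((n + k - 2) / k : ℕ)) :=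
  hararyEven_wiener_general k n hk hke
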